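/- Let ε ∈ (0,1], assume max_{j∈J} p_j > 0 (so C > 0), and let β be a partition of J into M (possibly empty) bags such that every bag has size p(B) ≤ 4C. Then ∑_{m=1}^M q_m · Opt_max(M̂, m) ≤ (1+5ε) · ∑_{m=1}^M q_m · Opt_max(β, m). -/

import Mathlib

open scoped BigOperators

attribute [local instance] Classical.propDecidable

/-- The load of machine `i` under the assignment `σ` of items (with sizes `sz`) to `m` machines. -/
noncomputable def load {ι : Type*} [Fintype ι] {m : ℕ} (sz : ι → ℝ) (σ : ι → Fin m)
    (i : Fin m) : ℝ :=
  ∑ b : ι, if σ b = i then sz b else 0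

/-- The optimal makespan (minimum over all assignments of the maximum machine load)
for items with sizes `sz` on `m` identical machines. -/
noncomputable def optMax {ι : Type*} [Fintype ι] (sz : ι → ℝ) (m : ℕ) : ℝ :=
  ⨅ σ : ι → Fin m, ⨆ i : Fin m, load sz σ i

/-- The size of bag `b` for the partition `β` of the jobs into bags. -/
noncomputable def bagSize {n : ℕ} {ι : Type*} (p : Fin n → ℝ) (β : Fin n → ι) (b : ι) : ℝ :=
  ∑ j : Fin n, if β j = b then p j else 0

/-- The quantity `C = ∑_{m=1}^M q_m · max (max_j p_j) ((∑_j p_j)/m)`,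
where scenario `i : Fin M` corresponds to `m = i+1` machines. -/
noncomputable def Cval {n M : ℕ} (p : Fin n → ℝ) (q : Fin M → ℝ) : ℝ :=
  ∑ i : Fin M, q i * max (⨆ j : Fin n, p j) ((∑ j : Fin n, p j) / ((i.1 + 1 : ℕ) : ℝ))

/-- A bag `b` of `β` is regular if its size is at least `εC` or it packs a job of size
at least `ε²C`. -/
def Regular {n M : ℕ} (ε C : ℝ) (p : Fin n → ℝ) (β : Fin n → Fin M) (b : Fin M) : Prop :=
  ε * C ≤ bagSize p β b ∨ ∃ j, β j = b ∧ ε ^ 2 * C ≤ p j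

/-- `L = {⌊log_{1+ε}(ε²C)⌋, …, ⌈log_{1+ε}(4C)⌉}`. -/
noncomputable def Lset (ε C : ℝ) : Finset ℤ :=
  Finset.Icc ⌊Real.log (ε ^ 2 * C) / Real.log (1 + ε)⌋ ⌈Real.log (4 * C) / Real.log (1 + ε)⌉

/-- `M̂_ℓ`: the number of regular bags of `β` with size in `[(1+ε)^ℓ, (1+ε)^{ℓ+1})`. -/
noncomputable def Mhat {n M : ℕ} (ε C : ℝ) (p : Fin n → ℝ) (β : Fin n → Fin M) (ℓ : ℤ) : ℕ :=
  (Finset.univ.filter (fun b : Fin M =>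
    Regular ε C p β b ∧ (1 + ε) ^ ℓ ≤ bagSize p β b ∧ bagSize p β b < (1 + ε) ^ (ℓ + 1))).card

/-- `M̂_sand = ⌈(total size of non-regular bags)/(εC)⌉`. -/
noncomputable def Msand {n M : ℕ} (ε C : ℝ) (p : Fin n → ℝ) (β : Fin n → Fin M) : ℕ :=
  ⌈(∑ b : Fin M, if ¬ Regular ε C p β b then bagSize p β b else 0) / (ε * C)⌉₊

/-- Index type for the collection of items consisting of `M̂_ℓ` items for each `ℓ ∈ L`
together with `M̂_sand` sand items. -/
def BagIdx {n M : ℕ} (ε C : ℝ) (p : Fin n → ℝ) (β : Fin n → Fin M) : Type :=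
  (Σ ℓ : (Lset ε C), Fin (Mhat ε C p β ℓ.1)) ⊕ Fin (Msand ε C p β)

noncomputable instance {n M : ℕ} (ε C : ℝ) (p : Fin n → ℝ) (β : Fin n → Fin M) :
    Fintype (BagIdx ε C p β) := by
  unfold BagIdx; infer_instance

/-- The sizes of the items of the guess `M̂`: each of the `M̂_ℓ` items has size `(1+ε)^{ℓ+1}`
and each of the `M̂_sand` items has size `(1+ε)·εC`. -/
noncomputable def itemSz {n M : ℕ} (ε C : ℝ) (p : Fin n → ℝ) (β : Fin n → Fin M) :
    BagIdx ε C p β → ℝ :=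
  Sum.elim (fun x => (1 + ε) ^ ((x.1.1 : ℤ) + 1)) (fun _ => (1 + ε) * ε * C)

/-!
Fix `m` and an optimal schedule of the bags. Each regular bag `B` of size class `ℓ` is replaced
by an item of size `(1+ε)^(ℓ+1) ≤ (1+ε)·p(B)` on the same machine, and a machine carrying
non-regular bags of total size `s` receives `⌈s/(εC)⌉` sand items of size `(1+ε)εC`; these
ceilings add up to at least `M̂_sand`. Every load grows to at most `(1+ε)·load + (1+ε)εC`, so
`Opt_max(M̂, m) ≤ (1+ε)·Opt_max(β, m) + 2εC`. As `C` is the `q`-average of the standard lower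
bounds `max(max_j p_j, p(J)/m)` on `Opt_max(β, m)`, averaging over `m` gives the factor `1+3ε`.
-/

open Function

section Load

variable {ι κ : Type*} [Fintype ι] [Fintype κ] {m : ℕ}

lemma load_nonneg {sz : ι → ℝ} (hsz : ∀ b, 0 ≤ sz b) (σ : ι → Fin m) (i : Fin m) :
    0 ≤ load sz σ i :=
  Finset.sum_nonneg fun b _ => ite_nonneg (hsz b) le_rfl

lemma sum_load (sz : ι → ℝ) (σ : ι → Fin m) : ∑ i, load sz σ i = ∑ b, sz b := by
  simp only [load]
  rw [Finset.sum_comm]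
  simp

lemma single_le_load {sz : ι → ℝ} (hsz : ∀ b, 0 ≤ sz b) (σ : ι → Fin m) (b : ι) :
    sz b ≤ load sz σ (σ b) := by
  simpa [load] using Finset.single_le_sum (f := fun b' => if σ b' = σ b then sz b' else 0)
    (fun b' _ => ite_nonneg (hsz b') le_rfl) (Finset.mem_univ b)

lemma load_add (f g : ι → ℝ) (σ : ι → Fin m) (i : Fin m) :
    load (f + g) σ i = load f σ i + load g σ i := by
  simp only [load, ← Finset.sum_add_distrib, Pi.add_apply, ite_add_ite, add_zero]

lemma load_const_mul (c : ℝ) (sz : ι → ℝ) (σ : ι → Fin m) (i : Fin m) :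
    load (fun b => c * sz b) σ i = c * load sz σ i := by
  simp only [load, Finset.mul_sum, mul_ite, mul_zero]

lemma load_sumElim (f : ι → ℝ) (g : κ → ℝ) (σ : ι → Fin m) (τ : κ → Fin m) (i : Fin m) :
    load (Sum.elim f g) (Sum.elim σ τ) i = load f σ i + load g τ i :=
  Fintype.sum_sum_type _

lemma load_comp_le {g : κ → ι} (hg : Injective g) {szA : κ → ℝ} {szB : ι → ℝ}
    (hB : ∀ b, 0 ≤ szB b) (hAB : ∀ k, szA k ≤ szB (g k)) (σ : ι → Fin m) (i : Fin m) :
    load szA (σ ∘ g) i ≤ load szB σ i :=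
  calc load szA (σ ∘ g) i ≤ ∑ b ∈ Finset.univ.map ⟨g, hg⟩, if σ b = i then szB b else 0 := by
        rw [Finset.sum_map]
        exact Finset.sum_le_sum fun k _ => by dsimp; split_ifs; exacts [hAB k, le_rfl]
    _ ≤ load szB σ i :=
        Finset.sum_le_sum_of_subset_of_nonneg (Finset.subset_univ _) fun b _ _ =>
          ite_nonneg (hB b) le_rfl

lemma load_le_iSup (sz : ι → ℝ) (σ : ι → Fin m) (i : Fin m) : load sz σ i ≤ ⨆ j, load sz σ j :=
  le_ciSup (Set.finite_range _).bddAbove i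

lemma optMax_le_iSup_load (sz : ι → ℝ) (σ : ι → Fin m) : optMax sz m ≤ ⨆ i, load sz σ i :=
  ciInf_le (Set.finite_range _).bddBelow σ

lemma exists_optMax_eq [NeZero m] (sz : ι → ℝ) :
    ∃ σ : ι → Fin m, optMax sz m = ⨆ i, load sz σ i := by
  obtain ⟨σ, hσ⟩ := exists_eq_ciInf_of_finite (f := fun σ : ι → Fin m => ⨆ i, load sz σ i)
  exact ⟨σ, hσ.symm⟩

lemma le_optMax [NeZero m] {sz : ι → ℝ} {x : ℝ} (h : ∀ σ : ι → Fin m, x ≤ ⨆ i, load sz σ i) :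
    x ≤ optMax sz m :=
  le_ciInf h

lemma le_optMax_of_nonneg [NeZero m] {sz : ι → ℝ} (hsz : ∀ b, 0 ≤ sz b) (b : ι) :
    sz b ≤ optMax sz m :=
  le_optMax fun σ => (single_le_load hsz σ b).trans (load_le_iSup sz σ _)

lemma sum_div_le_optMax [NeZero m] (sz : ι → ℝ) : (∑ b, sz b) / m ≤ optMax sz m :=
  le_optMax fun σ => by
    rw [div_le_iff₀ (Nat.cast_pos.mpr (NeZero.pos m)), ← sum_load sz σ]
    calc ∑ i, load sz σ i ≤ ∑ _i : Fin m, ⨆ j, load sz σ j :=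
          Finset.sum_le_sum fun i _ => load_le_iSup sz σ i
      _ = _ := by simp [mul_comm]

lemma optMax_nonneg [NeZero m] {sz : ι → ℝ} (hsz : ∀ b, 0 ≤ sz b) : 0 ≤ optMax sz m :=
  (div_nonneg (Finset.sum_nonneg fun b _ => hsz b) m.cast_nonneg).trans (sum_div_le_optMax sz)

lemma optMax_le_mul_add [NeZero m] {szA : κ → ℝ} {szB : ι → ℝ} {a c : ℝ} (ha : 0 ≤ a)
    (h : ∀ σ : ι → Fin m, ∃ τ : κ → Fin m, ∀ i, load szA τ i ≤ a * load szB σ i + c) :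
    optMax szA m ≤ a * optMax szB m + c := by
  obtain ⟨σ, hσ⟩ := exists_optMax_eq (m := m) szB
  obtain ⟨τ, hτ⟩ := h σ
  rw [hσ]
  refine (optMax_le_iSup_load szA τ).trans (ciSup_le fun i => (hτ i).trans ?_)
  gcongr
  exact load_le_iSup szB σ i

lemma exists_load_const_le {N : ℕ} {k : Fin m → ℕ} (hN : N ≤ ∑ i, k i) {a : ℝ} (ha : 0 ≤ a) :
    ∃ τ : Fin N → Fin m, ∀ i, load (fun _ => a) τ i ≤ k i * a := by
  obtain ⟨e⟩ : Nonempty (Fin N ↪ Σ i, Fin (k i)) :=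
    Function.Embedding.nonempty_of_card_le (by simpa using hN)
  refine ⟨Sigma.fst ∘ e, fun i => ?_⟩
  calc load (fun _ => a) (Sigma.fst ∘ e) i ≤ load (fun _ => a) Sigma.fst i :=
        load_comp_le e.injective (fun _ => ha) (fun _ => le_rfl) _ i
    _ = k i * a := by
        simp only [load, Fintype.sum_sigma]
        rw [Finset.sum_eq_single i] <;> simp +contextual

lemma exists_load_const_mul_le {N : ℕ} {s : Fin m → ℝ} (hs : ∀ i, 0 ≤ s i) {δ : ℝ} (hδ : 0 < δ)
    (hN : N ≤ ⌈(∑ i, s i) / δ⌉₊) {c : ℝ} (hc : 0 ≤ c) :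
    ∃ τ : Fin N → Fin m, ∀ i, load (fun _ => c * δ) τ i ≤ c * (s i + δ) := by
  have hceil : N ≤ ∑ i, ⌈s i / δ⌉₊ := hN.trans <| Nat.ceil_le.mpr <| by
    push_cast
    rw [Finset.sum_div]
    exact Finset.sum_le_sum fun i _ => Nat.le_ceil _
  obtain ⟨τ, hτ⟩ := exists_load_const_le hceil (mul_nonneg hc hδ.le)
  refine ⟨τ, fun i => (hτ i).trans ?_⟩
  have hround : (⌈s i / δ⌉₊ : ℝ) * δ ≤ (s i / δ + 1) * δ := by
    gcongr
    exact (Nat.ceil_lt_add_one (div_nonneg (hs i) hδ.le)).le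
  rw [add_mul, div_mul_cancel₀ _ hδ.ne', one_mul] at hround
  calc (⌈s i / δ⌉₊ : ℝ) * (c * δ) = c * (⌈s i / δ⌉₊ * δ) := by ring
    _ ≤ c * (s i + δ) := by gcongr

end Load

lemma eq_of_mem_Ico_zpow {K : Type*} [Field K] [LinearOrder K] [IsStrictOrderedRing K]
    {a x : K} (ha : 1 < a) {ℓ₁ ℓ₂ : ℤ} (h₁ : x ∈ Set.Ico (a ^ ℓ₁) (a ^ (ℓ₁ + 1)))
    (h₂ : x ∈ Set.Ico (a ^ ℓ₂) (a ^ (ℓ₂ + 1))) : ℓ₁ = ℓ₂ := by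
  have := (zpow_lt_zpow_iff_right₀ ha).mp (h₁.1.trans_lt h₂.2)
  have := (zpow_lt_zpow_iff_right₀ ha).mp (h₂.1.trans_lt h₁.2)
  omega

section Bags

variable {n M : ℕ} {p : Fin n → ℝ}

lemma bagSize_eq_load (p : Fin n → ℝ) (β : Fin n → Fin M) : bagSize p β = load p β := by
  ext b
  simp only [bagSize, load]
  -- `bagSize` decides `β j = b` classically, `load` by `instDecidableEqFin`
  congr!

lemma bagSize_nonneg (hp : ∀ j, 0 ≤ p j) (β : Fin n → Fin M) (b : Fin M) :
    0 ≤ bagSize p β b :=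
  bagSize_eq_load p β ▸ load_nonneg hp β b

lemma max_le_optMax_bagSize (hp : ∀ j, 0 ≤ p j) (β : Fin n → Fin M) (m : ℕ) [NeZero m] :
    max (⨆ j, p j) ((∑ j, p j) / m) ≤ optMax (bagSize p β) m := by
  rw [bagSize_eq_load]
  refine max_le (Real.iSup_le (fun j => ?_) (optMax_nonneg (load_nonneg hp β))) ?_
  · exact (single_le_load hp β j).trans (le_optMax_of_nonneg (load_nonneg hp β) _)
  · simpa only [sum_load] using sum_div_le_optMax (m := m) (load p β)

lemma Cval_le_sum_optMax (hp : ∀ j, 0 ≤ p j) {q : Fin M → ℝ} (hq : ∀ i, 0 ≤ q i)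
    (β : Fin n → Fin M) : Cval p q ≤ ∑ i : Fin M, q i * optMax (bagSize p β) (i.1 + 1) :=
  Finset.sum_le_sum fun i _ => mul_le_mul_of_nonneg_left (max_le_optMax_bagSize hp β _) (hq i)

lemma iSup_le_Cval {q : Fin M → ℝ} (hq : ∀ i, 0 ≤ q i) (hq1 : ∑ i, q i = 1) :
    (⨆ j, p j) ≤ Cval p q :=
  calc (⨆ j, p j) = ∑ i, q i * ⨆ j, p j := by rw [← Finset.sum_mul, hq1, one_mul]
    _ ≤ Cval p q := Finset.sum_le_sum fun i _ => mul_le_mul_of_nonneg_left (le_max_left _ _) (hq i)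

lemma exists_injective_regular {ε : ℝ} (hε : 0 < ε) (C : ℝ) (p : Fin n → ℝ)
    (β : Fin n → Fin M) :
    ∃ g : (Σ ℓ : Lset ε C, Fin (Mhat ε C p β ℓ)) → Fin M, Injective g ∧
      ∀ x, Regular ε C p β (g x) ∧ (1 + ε) ^ (x.1 : ℤ) ≤ bagSize p β (g x) := by
  let S : ℤ → Finset (Fin M) := fun ℓ => Finset.univ.filter fun b =>
    Regular ε C p β b ∧ (1 + ε) ^ ℓ ≤ bagSize p β b ∧ bagSize p β b < (1 + ε) ^ (ℓ + 1)
  have hS : ∀ ℓ b, b ∈ S ℓ ↔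
      Regular ε C p β b ∧ (1 + ε) ^ ℓ ≤ bagSize p β b ∧ bagSize p β b < (1 + ε) ^ (ℓ + 1) := by
    simp [S]
  let g (x : Σ ℓ : Lset ε C, Fin (Mhat ε C p β ℓ)) : S x.1 := (S x.1).equivFin.symm x.2
  refine ⟨fun x => g x, ?_, fun x => ⟨((hS _ _).mp (g x).2).1, ((hS _ _).mp (g x).2).2.1⟩⟩
  rintro ⟨ℓ₁, r₁⟩ ⟨ℓ₂, r₂⟩ h
  have h₁ := ((hS _ _).mp (g ⟨ℓ₁, r₁⟩).2).2
  have h₂ := ((hS _ _).mp (g ⟨ℓ₂, r₂⟩).2).2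
  replace h : (g ⟨ℓ₁, r₁⟩ : Fin M) = g ⟨ℓ₂, r₂⟩ := h
  rw [h] at h₁
  obtain rfl : ℓ₁ = ℓ₂ := Subtype.ext <| eq_of_mem_Ico_zpow (by linarith) h₁ h₂
  obtain rfl : r₁ = r₂ := (S ℓ₁).equivFin.symm.injective (Subtype.ext h)
  rfl

lemma exists_assignment_itemSz_le {ε C : ℝ} (hε : 0 < ε) (hC : 0 < C) (hp : ∀ j, 0 ≤ p j)
    (β : Fin n → Fin M) {m : ℕ} (σ : Fin M → Fin m) :
    ∃ τ : BagIdx ε C p β → Fin m, ∀ i,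
      load (itemSz ε C p β) τ i ≤ (1 + ε) * load (bagSize p β) σ i + (1 + ε) * (ε * C) := by
  let R : Fin M → ℝ := fun b => if Regular ε C p β b then bagSize p β b else 0
  let S : Fin M → ℝ := fun b => if ¬ Regular ε C p β b then bagSize p β b else 0
  have hbag := bagSize_nonneg hp β
  have hR : ∀ b, 0 ≤ R b := fun b => ite_nonneg (hbag b) le_rfl
  have hS : ∀ b, 0 ≤ S b := fun b => ite_nonneg (hbag b) le_rfl
  have hRS : R + S = bagSize p β := by
    ext b
    by_cases h : Regular ε C p β b <;> simp [R, S, h]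
  obtain ⟨g, hg, hgR⟩ := exists_injective_regular hε C p β
  obtain ⟨τS, hτS⟩ := exists_load_const_mul_le (N := Msand ε C p β) (load_nonneg hS σ)
    (mul_pos hε hC) (by rw [sum_load]; rfl) (c := 1 + ε) (by linarith)
  have hregular : load (fun x => itemSz ε C p β (Sum.inl x)) (σ ∘ g) ≤ (1 + ε) • load R σ := by
    intro i
    rw [Pi.smul_apply, smul_eq_mul, ← load_const_mul]
    refine load_comp_le hg (fun b => mul_nonneg (by linarith) (hR b)) (fun x => ?_) σ i
    obtain ⟨hreg, hsize⟩ := hgR x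
    simp only [itemSz, Sum.elim_inl, R, if_pos hreg]
    rw [zpow_add_one₀ (by linarith), mul_comm]
    gcongr
  refine ⟨Sum.elim (σ ∘ g) τS, fun i => ?_⟩
  calc load (itemSz ε C p β) (Sum.elim (σ ∘ g) τS) i
      = load (fun x => itemSz ε C p β (Sum.inl x)) (σ ∘ g) i
        + load (fun _ => (1 + ε) * (ε * C)) τS i := by
        simp only [itemSz, mul_assoc]
        exact load_sumElim _ _ _ _ i
    _ ≤ (1 + ε) * load R σ i + (1 + ε) * (load S σ i + ε * C) := add_le_add (hregular i) (hτS i)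
    _ = (1 + ε) * load (bagSize p β) σ i + (1 + ε) * (ε * C) := by rw [← hRS, load_add]; ring

lemma optMax_itemSz_le {ε C : ℝ} (hε : 0 < ε) (hC : 0 < C) (hp : ∀ j, 0 ≤ p j)
    (β : Fin n → Fin M) (m : ℕ) [NeZero m] :
    optMax (itemSz ε C p β) m ≤ (1 + ε) * optMax (bagSize p β) m + (1 + ε) * (ε * C) :=
  optMax_le_mul_add (by linarith) fun σ => exists_assignment_itemSz_le hε hC hp β σ

end Bags

theorem stmt4_general (n M : ℕ) (ε : ℝ) (hε0 : 0 < ε) (hε1 : ε ≤ 1)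
    (p : Fin n → ℝ) (hp : ∀ j, 0 ≤ p j) (hpmax : 0 < ⨆ j : Fin n, p j)
    (q : Fin M → ℝ) (hq : ∀ i, 0 ≤ q i) (hq1 : ∑ i, q i = 1)
    (β : Fin n → Fin M) :
    ∑ i : Fin M, q i * optMax (itemSz ε (Cval p q) p β) (i.1 + 1) ≤
      (1 + 5 * ε) * ∑ i : Fin M, q i * optMax (bagSize p β) (i.1 + 1) := by
  set C := Cval p q
  set X := ∑ i : Fin M, q i * optMax (bagSize p β) (i.1 + 1)
  have hCX : C ≤ X := Cval_le_sum_optMax hp hq β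
  have hC : 0 < C := hpmax.trans_le (iSup_le_Cval hq hq1)
  calc ∑ i : Fin M, q i * optMax (itemSz ε C p β) (i.1 + 1)
      ≤ ∑ i : Fin M, q i * ((1 + ε) * optMax (bagSize p β) (i.1 + 1) + (1 + ε) * (ε * C)) :=
        Finset.sum_le_sum fun i _ =>
          mul_le_mul_of_nonneg_left (optMax_itemSz_le hε0 hC hp β _) (hq i)
    _ = (1 + ε) * X + (∑ i, q i) * ((1 + ε) * (ε * C)) := by
        rw [Finset.mul_sum, Finset.sum_mul, ← Finset.sum_add_distrib]
        exact Finset.sum_congr rfl fun i _ => by ring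
    _ ≤ (1 + 5 * ε) * X := by
        rw [hq1]
        nlinarith [mul_le_mul_of_nonneg_left hCX hε0.le,
          mul_le_mul_of_nonneg_right hε1 (mul_nonneg hε0.le hC.le)]

/-- the expected makespan of the guess `M̂` is at most `(1+5ε)` times the
expected makespan of `β`: `∑_{m=1}^M q_m·Opt_max(M̂,m) ≤ (1+5ε)·∑_{m=1}^M q_m·Opt_max(β,m)`. -/
theorem stmt4 (n M : ℕ) (hM : 1 ≤ M) (ε : ℝ) (hε0 : 0 < ε) (hε1 : ε ≤ 1)
    (p : Fin n → ℝ) (hp : ∀ j, 0 ≤ p j) (hpmax : 0 < ⨆ j : Fin n, p j)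
    (q : Fin M → ℝ) (hq : ∀ i, 0 ≤ q i) (hq1 : ∑ i, q i = 1)
    (β : Fin n → Fin M) (hβ : ∀ b, bagSize p β b ≤ 4 * Cval p q) :
    ∑ i : Fin M, q i * optMax (itemSz ε (Cval p q) p β) (i.1 + 1) ≤
      (1 + 5 * ε) * ∑ i : Fin M, q i * optMax (bagSize p β) (i.1 + 1) :=
  stmt4_general n M ε hε0 hε1 p hp hpmax q hq hq1 β
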